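/- Let ρ_AB be a separable bipartite state on ℂ^{d_A} ⊗ ℂ^{d_B} such that rank ρ_AB = d and rank ρ_A = d. Then ρ_AB can be written as a convex combination of at most d pure product states: there exist λ₁,…,λ_d ≥ 0 with Σ_{i=1}^d λ_i = 1 and unit vectors a_i ∈ ℂ^{d_A}, b_i ∈ ℂ^{d_B} (i = 1,…,d) such that ρ_AB = Σ_{i=1}^d λ_i |a_i⟩⟨a_i| ⊗ |b_i⟩⟨b_i|. -/

import Mathlib

open Matrix Kronecker
open scoped ComplexOrder

noncomputable section

/-- `|v⟩⟨v|`, the rank-one matrix `v v*`. -/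
def ketBra {d : ℕ} (v : Fin d → ℂ) : Matrix (Fin d) (Fin d) ℂ :=
  vecMulVec v (star v)

/-- Partial trace over the `B` factor: `(Tr_B γ)_{jk} = Σ_m γ_{(j,m),(k,m)}`. -/
def trB {dA dB : ℕ} (γ : Matrix (Fin dA × Fin dB) (Fin dA × Fin dB) ℂ) :
    Matrix (Fin dA) (Fin dA) ℂ :=
  Matrix.of fun j k => ∑ m : Fin dB, γ (j, m) (k, m)

/-- Partial trace over the `A` factor: `(Tr_A γ)_{mn} = Σ_j γ_{(j,m),(j,n)}`. -/
def trA {dA dB : ℕ} (γ : Matrix (Fin dA × Fin dB) (Fin dA × Fin dB) ℂ) :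
    Matrix (Fin dB) (Fin dB) ℂ :=
  Matrix.of fun m n => ∑ j : Fin dA, γ (j, m) (j, n)

/-- A positive semidefinite matrix indexed by `(Fin dA) × (Fin dB)` is separable if it is
a finite positive combination of Kronecker products `|a⟩⟨a| ⊗ |b⟩⟨b|`. -/
def MatrixSeparable {dA dB : ℕ} (γ : Matrix (Fin dA × Fin dB) (Fin dA × Fin dB) ℂ) : Prop :=
  ∃ (n : ℕ) (lam : Fin n → ℝ) (a : Fin n → Fin dA → ℂ) (b : Fin n → Fin dB → ℂ),
    (∀ i, 0 ≤ lam i) ∧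
      γ = ∑ i, (lam i : ℂ) • (ketBra (a i) ⊗ₖ ketBra (b i))

/-!
Write `ρ = ∑ᵢ λᵢ |aᵢ⟩⟨aᵢ| ⊗ |bᵢ⟩⟨bᵢ|` with `λᵢ > 0` and unit vectors. Then `rank ρ` is the dimension
of the span of the `aᵢ ⊗ bᵢ` and `rank ρ_A` that of the span of the `aᵢ`. Pick `d` of the `aᵢ`
forming a basis of their span; the corresponding product vectors are independent, hence by the
rank hypothesis span all the `aᵢ ⊗ bᵢ`. Comparing the two expansions of `aⱼ ⊗ bⱼ` shows that
`aⱼ` is a combination of those basis vectors `a_k` with `b_k` parallel to `bⱼ`. Grouping the terms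
of `ρ` by the pure state `|b⟩⟨b|` gives `ρ = ∑_P σ_P ⊗ P`, where the range of `σ_P` is spanned by
the basis vectors of its class. Diagonalizing `σ_P` thus needs at most as many terms as the class
has basis vectors, `d` terms in total.
-/

open Submodule Module
open scoped Finset

def kronVec {𝕜 α β : Type*} [Mul 𝕜] (a : α → 𝕜) (b : β → 𝕜) : α × β → 𝕜 :=
  fun p => a p.1 * b p.2

section LinearAlgebra

variable {𝕜 α β ι κ : Type*} [Field 𝕜]

lemma kronVec_smul_right (a : α → 𝕜) (c : 𝕜) (b : β → 𝕜) :
    kronVec a (c • b) = c • kronVec a b := by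
  ext p; simp [kronVec, mul_left_comm]

lemma LinearIndependent.eq_zero_of_sum_kronVec_eq_zero [Fintype κ] {a : κ → α → 𝕜}
    (ha : LinearIndependent 𝕜 a) {w : κ → β → 𝕜} (h : ∑ m, kronVec (a m) (w m) = 0) (m : κ) :
    w m = 0 := by
  funext y
  refine Fintype.linearIndependent_iff.mp ha (fun m => w m y) ?_ m
  funext x
  simpa [kronVec, mul_comm] using congrFun h (x, y)

lemma LinearIndependent.smul_eq_smul_of_kronVec_sum_eq [Fintype κ] {f : κ → α → 𝕜}
    (hf : LinearIndependent 𝕜 f) {b : κ → β → 𝕜} {c e : κ → 𝕜} {y : β → 𝕜}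
    (h : kronVec (∑ m, c m • f m) y = ∑ m, e m • kronVec (f m) (b m)) (m : κ) :
    e m • b m = c m • y := by
  refine sub_eq_zero.mp (hf.eq_zero_of_sum_kronVec_eq_zero
    (w := fun m => e m • b m - c m • y) ?_ m)
  rw [← sub_eq_zero.mpr h.symm]
  ext p
  simp [kronVec, Finset.sum_apply, mul_sub, Finset.sum_mul, Finset.sum_sub_distrib,
    mul_left_comm, mul_assoc]

lemma LinearIndependent.kronVec [Fintype κ] {a : κ → α → 𝕜} (ha : LinearIndependent 𝕜 a)
    {b : κ → β → 𝕜} (hb : ∀ m, b m ≠ 0) :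
    LinearIndependent 𝕜 fun m => kronVec (a m) (b m) := by
  refine Fintype.linearIndependent_iff.mpr fun g hg m => ?_
  have := ha.eq_zero_of_sum_kronVec_eq_zero (w := fun m => g m • b m)
    (by simpa [kronVec_smul_right] using hg) m
  exact (smul_eq_zero.mp this).resolve_right (hb m)

theorem exists_subfamily_mem_span_of_finrank_kronVec_le [Finite ι] (a : ι → α → 𝕜)
    (b : ι → β → 𝕜) (hb : ∀ i, b i ≠ 0)
    (hdim : finrank 𝕜 (span 𝕜 (Set.range fun i => kronVec (a i) (b i))) ≤
      finrank 𝕜 (span 𝕜 (Set.range a))) :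
    ∃ k : Fin (finrank 𝕜 (span 𝕜 (Set.range a))) → ι,
      ∀ j, a j ∈ span 𝕜 ((a ∘ k) '' {m | b j ∈ 𝕜 ∙ b (k m)}) := by
  have := FiniteDimensional.span_of_finite 𝕜 (Set.finite_range a)
  have := FiniteDimensional.span_of_finite 𝕜 (Set.finite_range fun i => kronVec (a i) (b i))
  obtain ⟨f, hf, hspan, hli⟩ := exists_fun_fin_finrank_span_eq 𝕜 (Set.range a)
  choose k hk using hf
  have hak : a ∘ k = f := funext hk
  refine ⟨k, fun j => ?_⟩
  rw [hak]
  have hprod : kronVec (a j) (b j) ∈ span 𝕜 (Set.range fun m => kronVec (f m) (b (k m))) := by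
    have hle : span 𝕜 (Set.range fun m => kronVec (f m) (b (k m))) ≤
        span 𝕜 (Set.range fun i => kronVec (a i) (b i)) :=
      span_mono (by rintro _ ⟨m, rfl⟩; exact ⟨k m, by simp [hk]⟩)
    rw [eq_of_le_of_finrank_le hle (by
      rwa [finrank_span_eq_card (hli.kronVec fun m => hb (k m)), Fintype.card_fin])]
    exact subset_span ⟨j, rfl⟩
  obtain ⟨e, he⟩ := (mem_span_range_iff_exists_fun 𝕜).mp hprod
  obtain ⟨c, hc⟩ := (mem_span_range_iff_exists_fun 𝕜).mp
    (by rw [hspan]; exact subset_span ⟨j, rfl⟩ : a j ∈ span 𝕜 (Set.range f))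
  have hcoeff : ∀ m, e m • b (k m) = c m • b j :=
    hli.smul_eq_smul_of_kronVec_sum_eq (by rw [hc, he])
  rw [← hc]
  refine sum_mem fun m _ => ?_
  by_cases hcm : c m = 0
  · simp [hcm]
  refine smul_mem _ _ (subset_span ⟨m, mem_span_singleton.mpr ⟨(c m)⁻¹ * e m, ?_⟩, rfl⟩)
  rw [mul_smul, hcoeff m, smul_smul, inv_mul_cancel₀ hcm, one_smul]

end LinearAlgebra

lemma Matrix.sum_kronecker {ι l m n p α : Type*} [NonUnitalNonAssocSemiring α] (s : Finset ι)
    (A : ι → Matrix l m α) (B : Matrix n p α) : (∑ i ∈ s, A i) ⊗ₖ B = ∑ i ∈ s, A i ⊗ₖ B := by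
  ext ⟨j, x⟩ ⟨k, y⟩
  simp [Matrix.sum_apply, Finset.sum_mul]

section Matrices

variable {𝕜 R α β η ι : Type*} [RCLike 𝕜] [CommSemiring R] [StarRing R]

lemma vecMulVec_kronVec (a : α → R) (b : β → R) :
    vecMulVec (kronVec a b) (star (kronVec a b)) =
      vecMulVec a (star a) ⊗ₖ vecMulVec b (star b) := by
  ext ⟨j, m⟩ ⟨k, n⟩
  simp [kronVec, vecMulVec_apply, mul_mul_mul_comm]

variable [Fintype η]

theorem rank_sum_smul_vecMulVec_self_star (s : Finset ι) {c : ι → ℝ} (hc : ∀ i ∈ s, 0 < c i)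
    (v : ι → η → ℂ) :
    (∑ i ∈ s, (c i : ℂ) • vecMulVec (v i) (star (v i))).rank = finrank ℂ (span ℂ (v '' s)) := by
  classical
  let V : Matrix η s ℂ := of fun p i => v i p
  let D : Matrix s s ℂ := diagonal fun i => (√(c i) : ℂ)
  have hsqrt : ∀ i : s, (√(c i) : ℂ) * √(c i) = c i := fun i => by
    rw [← Complex.ofReal_mul, Real.mul_self_sqrt (hc i i.2).le]
  have hVD : ∑ i ∈ s, (c i : ℂ) • vecMulVec (v i) (star (v i)) = (V * D) * (V * D)ᴴ := by
    rw [← Finset.sum_coe_sort s]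
    ext p q
    simp only [V, D, Matrix.sum_apply, Matrix.smul_apply, vecMulVec_apply, mul_apply,
      conjTranspose_apply, of_apply, diagonal_apply, Pi.star_apply, smul_eq_mul, mul_ite,
      mul_zero, Finset.sum_ite_eq', Finset.mem_univ, if_true, star_mul', Complex.star_def,
      Complex.conj_ofReal]
    refine Finset.sum_congr rfl fun i _ => ?_
    linear_combination (v i p * (starRingEnd ℂ) (v i q)) * (hsqrt i).symm
  have hD : IsUnit D.det := by
    simpa [D, det_diagonal, Finset.prod_ne_zero_iff] using
      fun i hi => (Real.sqrt_pos.2 (hc i hi)).ne'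
  rw [hVD, rank_self_mul_conjTranspose, rank_mul_eq_left_of_isUnit_det D V hD,
    rank_eq_finrank_span_cols, Set.image_eq_range]
  rfl

variable [DecidableEq η]

theorem Matrix.IsHermitian.eq_sum_eigenvalues_smul_vecMulVec {A : Matrix η η 𝕜}
    (hA : A.IsHermitian) :
    A = ∑ i, (hA.eigenvalues i : 𝕜) •
      vecMulVec ⇑(hA.eigenvectorBasis i) (star ⇑(hA.eigenvectorBasis i)) := by
  conv_lhs => rw [hA.spectral_theorem]
  ext p q
  simp [mul_apply, diagonal, vecMulVec_apply, Matrix.sum_apply, RCLike.real_smul_eq_coe_mul,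
    mul_comm, mul_left_comm, mul_assoc]

lemma Matrix.IsHermitian.star_eigenvectorBasis_dotProduct_self {A : Matrix η η 𝕜}
    (hA : A.IsHermitian) (i : η) :
    star ⇑(hA.eigenvectorBasis i) ⬝ᵥ ⇑(hA.eigenvectorBasis i) = 1 := by
  rw [dotProduct_comm, ← EuclideanSpace.inner_eq_star_dotProduct, inner_self_eq_norm_sq_to_K,
    hA.eigenvectorBasis.orthonormal.1 i]
  simp

end Matrices

lemma ketBra_eq_of_mem_span_singleton {d : ℕ} {u v : Fin d → ℂ} (hu : star u ⬝ᵥ u = 1)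
    (hv : star v ⬝ᵥ v = 1) (h : v ∈ ℂ ∙ u) : ketBra v = ketBra u := by
  obtain ⟨t, rfl⟩ := mem_span_singleton.mp h
  have ht : t * (starRingEnd ℂ) t = 1 := by
    simpa [hu, Complex.star_def, mul_comm, mul_assoc] using hv
  ext j k
  simp only [ketBra, vecMulVec_apply, Pi.star_apply, Pi.smul_apply, smul_eq_mul, star_mul',
    Complex.star_def]
  linear_combination (u j * (starRingEnd ℂ) (u k)) * ht

lemma exists_ketBra_eq_smul_ketBra {d : ℕ} {v : Fin d → ℂ} (hv : v ≠ 0) :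
    ∃ r : ℝ, 0 < r ∧ ∃ u : Fin d → ℂ, star u ⬝ᵥ u = 1 ∧ ketBra v = (r : ℂ) • ketBra u := by
  obtain ⟨hr, hz⟩ := Complex.pos_iff.mp (dotProduct_star_self_pos_iff.mpr hv)
  set r := (star v ⬝ᵥ v).re
  have hvv : star v ⬝ᵥ v = r := Complex.ext rfl (by simpa using hz.symm)
  set c : ℝ := (√r)⁻¹
  have hc : (c : ℂ) * c * r = 1 := by
    norm_cast
    rw [← mul_inv, Real.mul_self_sqrt hr.le, inv_mul_cancel₀ hr.ne']
  refine ⟨r, hr, (c : ℂ) • v, ?_, ?_⟩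
  · simpa [hvv, ← mul_assoc] using hc
  · ext j k
    simp only [ketBra, vecMulVec_apply, Pi.star_apply, Pi.smul_apply, Matrix.smul_apply,
      smul_eq_mul, star_mul', Complex.star_def, Complex.conj_ofReal]
    linear_combination (-(v j * (starRingEnd ℂ) (v k))) * hc

section Bipartite

variable {dA dB : ℕ}

lemma trace_ketBra {d : ℕ} (v : Fin d → ℂ) : (ketBra v).trace = star v ⬝ᵥ v := by
  rw [ketBra, trace_vecMulVec, dotProduct_comm]

lemma trace_sum_smul_ketBra_kronecker {ι : Type*} [Fintype ι] (lam : ι → ℝ)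
    {a : ι → Fin dA → ℂ} {b : ι → Fin dB → ℂ} (ha : ∀ i, star (a i) ⬝ᵥ a i = 1)
    (hb : ∀ i, star (b i) ⬝ᵥ b i = 1) :
    (∑ i, (lam i : ℂ) • (ketBra (a i) ⊗ₖ ketBra (b i))).trace = ∑ i, lam i := by
  simp [trace_sum, trace_kronecker, trace_ketBra, ha, hb]

lemma trB_sum_smul_kronecker {ι : Type*} (s : Finset ι) (c : ι → ℂ)
    (A : ι → Matrix (Fin dA) (Fin dA) ℂ) (B : ι → Matrix (Fin dB) (Fin dB) ℂ) :
    trB (∑ i ∈ s, c i • (A i ⊗ₖ B i)) = ∑ i ∈ s, (c i * (B i).trace) • A i := by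
  ext j k
  simp [trB, Matrix.sum_apply, Matrix.trace, Finset.mul_sum, mul_comm, mul_left_comm]
  exact Finset.sum_comm

lemma MatrixSeparable.exists_pos_weights_unit_vectors
    {ρ : Matrix (Fin dA × Fin dB) (Fin dA × Fin dB) ℂ} (hρ : MatrixSeparable ρ) :
    ∃ (ι : Type) (_ : Fintype ι) (lam : ι → ℝ) (a : ι → Fin dA → ℂ) (b : ι → Fin dB → ℂ),
      (∀ i, 0 < lam i) ∧ (∀ i, star (a i) ⬝ᵥ a i = 1) ∧ (∀ i, star (b i) ⬝ᵥ b i = 1) ∧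
        ρ = ∑ i, (lam i : ℂ) • (ketBra (a i) ⊗ₖ ketBra (b i)) := by
  classical
  obtain ⟨n, lam, a, b, hlam, rfl⟩ := hρ
  set term := fun i => (lam i : ℂ) • (ketBra (a i) ⊗ₖ ketBra (b i))
  have key : ∀ i, term i ≠ 0 → ∃ c : ℝ, 0 < c ∧ ∃ a' : Fin dA → ℂ, star a' ⬝ᵥ a' = 1 ∧
      ∃ b' : Fin dB → ℂ, star b' ⬝ᵥ b' = 1 ∧ term i = (c : ℂ) • (ketBra a' ⊗ₖ ketBra b') := by
    intro i hi
    have hlam0 : lam i ≠ 0 := fun h => hi (by simp [term, h])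
    have ha : a i ≠ 0 := fun h => hi (by simp [term, h, ketBra])
    have hb : b i ≠ 0 := fun h => hi (by simp [term, h, ketBra])
    obtain ⟨r, hr, a', ha', hra⟩ := exists_ketBra_eq_smul_ketBra ha
    obtain ⟨s, hs, b', hb', hsb⟩ := exists_ketBra_eq_smul_ketBra hb
    refine ⟨lam i * r * s, by have := (hlam i).lt_of_ne' hlam0; positivity, a', ha', b', hb', ?_⟩
    simp only [term, hra, hsb, smul_kronecker, kronecker_smul, smul_smul]
    push_cast
    ring_nf
  choose c hc a' ha' b' hb' heq using fun i : {i // term i ≠ 0} => key i i.2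
  refine ⟨{i // term i ≠ 0}, inferInstance, c, a', b', hc, ha', hb', ?_⟩
  rw [← Finset.sum_filter_ne_zero, Finset.sum_subtype (p := fun i => term i ≠ 0) _
    fun _ => by simp [term]]
  exact Finset.sum_congr rfl fun i _ => heq i

def HasPureProductDecomposition (ρ : Matrix (Fin dA × Fin dB) (Fin dA × Fin dB) ℂ) (N : ℕ) :
    Prop :=
  ∃ (lam : Fin N → ℝ) (a : Fin N → Fin dA → ℂ) (b : Fin N → Fin dB → ℂ),
    (∀ i, 0 ≤ lam i) ∧ (∀ i, star (a i) ⬝ᵥ a i = 1) ∧ (∀ i, star (b i) ⬝ᵥ b i = 1) ∧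
      ρ = ∑ i, (lam i : ℂ) • (ketBra (a i) ⊗ₖ ketBra (b i))

namespace HasPureProductDecomposition

lemma single {c : ℝ} (hc : 0 ≤ c) {a : Fin dA → ℂ} {b : Fin dB → ℂ}
    (ha : star a ⬝ᵥ a = 1) (hb : star b ⬝ᵥ b = 1) :
    HasPureProductDecomposition ((c : ℂ) • (ketBra a ⊗ₖ ketBra b)) 1 :=
  ⟨fun _ => c, fun _ => a, fun _ => b, fun _ => hc, fun _ => ha, fun _ => hb, by simp⟩

lemma zero : HasPureProductDecomposition (0 : Matrix (Fin dA × Fin dB) (Fin dA × Fin dB) ℂ) 0 :=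
  ⟨Fin.elim0, Fin.elim0, Fin.elim0, Fin.rec0, Fin.rec0, Fin.rec0, by simp⟩

lemma zero_of_neZero [NeZero dA] [NeZero dB] (N : ℕ) :
    HasPureProductDecomposition (0 : Matrix (Fin dA × Fin dB) (Fin dA × Fin dB) ℂ) N :=
  ⟨0, fun _ => Pi.single 0 1, fun _ => Pi.single 0 1, fun _ => le_rfl, fun _ => by simp,
    fun _ => by simp, by simp⟩

lemma add {ρ ρ' : Matrix (Fin dA × Fin dB) (Fin dA × Fin dB) ℂ} {N M : ℕ}
    (h : HasPureProductDecomposition ρ N) (h' : HasPureProductDecomposition ρ' M) :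
    HasPureProductDecomposition (ρ + ρ') (N + M) := by
  obtain ⟨lam, a, b, hlam, ha, hb, rfl⟩ := h
  obtain ⟨lam', a', b', hlam', ha', hb', rfl⟩ := h'
  refine ⟨Fin.append lam lam', Fin.append a a', Fin.append b b', Fin.addCases ?_ ?_,
    Fin.addCases ?_ ?_, Fin.addCases ?_ ?_, ?_⟩ <;> simp [Fin.sum_univ_add, *]

lemma sum {ι : Type*} (s : Finset ι) {ρ : ι → Matrix (Fin dA × Fin dB) (Fin dA × Fin dB) ℂ}
    {N : ι → ℕ} (h : ∀ i ∈ s, HasPureProductDecomposition (ρ i) (N i)) :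
    HasPureProductDecomposition (∑ i ∈ s, ρ i) (∑ i ∈ s, N i) := by
  classical
  induction s using Finset.induction_on with
  | empty => simpa using zero
  | insert i s hi ih =>
    rw [Finset.sum_insert hi, Finset.sum_insert hi]
    exact (h i (Finset.mem_insert_self i s)).add (ih fun j hj => h j (Finset.mem_insert_of_mem hj))

lemma mono [NeZero dA] [NeZero dB] {ρ : Matrix (Fin dA × Fin dB) (Fin dA × Fin dB) ℂ} {N M : ℕ}
    (h : HasPureProductDecomposition ρ N) (hNM : N ≤ M) : HasPureProductDecomposition ρ M := by
  obtain ⟨k, rfl⟩ := Nat.exists_eq_add_of_le hNM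
  simpa using h.add (zero_of_neZero k)

end HasPureProductDecomposition

lemma hasPureProductDecomposition_kronecker_ketBra {σ : Matrix (Fin dA) (Fin dA) ℂ}
    (hσ : σ.PosSemidef) {b : Fin dB → ℂ} (hb : star b ⬝ᵥ b = 1) :
    HasPureProductDecomposition (σ ⊗ₖ ketBra b) σ.rank := by
  classical
  have hH := hσ.isHermitian
  have hσb : σ ⊗ₖ ketBra b = ∑ i with hH.eigenvalues i ≠ 0,
      (hH.eigenvalues i : ℂ) • (ketBra ⇑(hH.eigenvectorBasis i) ⊗ₖ ketBra b) := by
    rw [Finset.sum_filter_of_ne fun i _ h => by contrapose! h; simp [h]]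
    conv_lhs => rw [hH.eq_sum_eigenvalues_smul_vecMulVec]
    simp only [Matrix.sum_kronecker, smul_kronecker]
    rfl
  rw [hH.rank_eq_card_non_zero_eigs, Fintype.card_subtype, Finset.card_eq_sum_ones, hσb]
  exact .sum _ fun i _ => .single (hσ.eigenvalues_nonneg i)
    (hH.star_eigenvectorBasis_dotProduct_self i) hb

theorem hasPureProductDecomposition_of_mem_span {ι : Type*} [Fintype ι] {lam : ι → ℝ}
    (hlam : ∀ i, 0 < lam i) (a : ι → Fin dA → ℂ) {b : ι → Fin dB → ℂ}
    (hb : ∀ i, star (b i) ⬝ᵥ b i = 1) {r : ℕ} (k : Fin r → ι)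
    (hk : ∀ j, a j ∈ span ℂ ((a ∘ k) '' {m | b j ∈ ℂ ∙ b (k m)})) :
    ∃ N ≤ r, HasPureProductDecomposition (∑ i, (lam i : ℂ) • (ketBra (a i) ⊗ₖ ketBra (b i))) N := by
  classical
  let P : ι → Matrix (Fin dB) (Fin dB) ℂ := fun i => ketBra (b i)
  let σ : Matrix (Fin dB) (Fin dB) ℂ → Matrix (Fin dA) (Fin dA) ℂ :=
    fun Q => ∑ i with P i = Q, (lam i : ℂ) • ketBra (a i)
  have hP : ∀ i, P i ∈ Finset.univ.image P := fun i => Finset.mem_image_of_mem P (Finset.mem_univ i)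
  have hρ : ∑ i, (lam i : ℂ) • (ketBra (a i) ⊗ₖ ketBra (b i)) =
      ∑ Q ∈ Finset.univ.image P, σ Q ⊗ₖ Q := by
    rw [← Finset.sum_fiberwise_of_maps_to (g := P) fun i _ => hP i]
    refine Finset.sum_congr rfl fun Q _ => ?_
    rw [Matrix.sum_kronecker]
    refine Finset.sum_congr rfl fun i hi => ?_
    rw [← (Finset.mem_filter.mp hi).2, smul_kronecker]
  have hrank : ∀ Q, (σ Q).rank ≤ #{m | P (k m) = Q} := by
    intro Q
    calc (σ Q).rank = finrank ℂ (span ℂ (a '' {i | P i = Q})) := by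
          change (∑ i with P i = Q, (lam i : ℂ) • vecMulVec (a i) (star (a i))).rank = _
          rw [rank_sum_smul_vecMulVec_self_star _ (fun i _ => hlam i), Finset.coe_filter_univ]
      _ ≤ finrank ℂ (span ℂ ((a ∘ k) '' {m | P (k m) = Q})) := by
          refine Submodule.finrank_mono (span_le.mpr ?_)
          rintro _ ⟨i, rfl : P i = Q, rfl⟩
          refine span_mono (Set.image_mono fun m hm => ?_) (hk i)
          exact (ketBra_eq_of_mem_span_singleton (hb _) (hb i) hm).symm
      _ ≤ #{m | P (k m) = Q} := by
          rw [show (a ∘ k) '' {m | P (k m) = Q} =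
              (({m | P (k m) = Q} : Finset (Fin r)).image (a ∘ k) : Set (Fin dA → ℂ)) by simp]
          exact (finrank_span_finset_le_card _).trans Finset.card_image_le
  refine ⟨∑ Q ∈ Finset.univ.image P, (σ Q).rank, ?_, hρ ▸ .sum _ fun Q hQ => ?_⟩
  · calc _ ≤ ∑ Q ∈ Finset.univ.image P, #{m | P (k m) = Q} := Finset.sum_le_sum fun Q _ => hrank Q
      _ = r := by
        rw [← Finset.card_eq_sum_card_fiberwise fun m _ => hP (k m), Finset.card_univ,
          Fintype.card_fin]
  · obtain ⟨j, -, rfl⟩ := Finset.mem_image.mp hQ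
    refine hasPureProductDecomposition_kronecker_ketBra (posSemidef_sum _ fun i _ => ?_) (hb j)
    exact (posSemidef_vecMulVec_self_star (a i)).smul (by exact_mod_cast (hlam i).le)

end Bipartite

theorem separable_convex_combination_of_rank_general {dA dB d : ℕ}
    (ρ : Matrix (Fin dA × Fin dB) (Fin dA × Fin dB) ℂ)
    (htr : ρ.trace = 1) (hsep : MatrixSeparable ρ)
    (hrank : ρ.rank = d) (hrankA : (trB ρ).rank = d) :
    ∃ (lam : Fin d → ℝ) (a : Fin d → Fin dA → ℂ) (b : Fin d → Fin dB → ℂ),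
      (∀ i, 0 ≤ lam i) ∧ (∑ i, lam i) = 1 ∧
      (∀ i, star (a i) ⬝ᵥ a i = 1) ∧ (∀ i, star (b i) ⬝ᵥ b i = 1) ∧
      ρ = ∑ i, (lam i : ℂ) • (ketBra (a i) ⊗ₖ ketBra (b i)) := by
  have : NeZero dA := ⟨by rintro rfl; simp [Matrix.trace] at htr⟩
  have : NeZero dB := ⟨by rintro rfl; simp [Matrix.trace] at htr⟩
  obtain ⟨ι, _, lam, a, b, hlam, -, hb, rfl⟩ := hsep.exists_pos_weights_unit_vectors
  have hA : finrank ℂ (span ℂ (Set.range a)) = d := by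
    rw [← hrankA, trB_sum_smul_kronecker, ← Set.image_univ,
      ← Finset.coe_univ, ← rank_sum_smul_vecMulVec_self_star _ fun i _ => hlam i]
    simp only [trace_ketBra, hb, mul_one]
    rfl
  have hAB : finrank ℂ (span ℂ (Set.range fun i => kronVec (a i) (b i))) = d := by
    rw [← hrank, ← Set.image_univ, ← Finset.coe_univ,
      ← rank_sum_smul_vecMulVec_self_star _ fun i _ => hlam i]
    simp only [vecMulVec_kronVec]
    rfl
  obtain ⟨k, hk⟩ := exists_subfamily_mem_span_of_finrank_kronVec_le a b
    (fun i h => by simpa [h] using hb i) (hAB.trans hA.symm).le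
  obtain ⟨N, hN, hdec⟩ := hasPureProductDecomposition_of_mem_span hlam a hb k hk
  obtain ⟨lam', a', b', hlam', ha', hb', hρ⟩ := hdec.mono (hA ▸ hN)
  refine ⟨lam', a', b', hlam', ?_, ha', hb', hρ⟩
  exact_mod_cast (trace_sum_smul_ketBra_kronecker lam' ha' hb').symm.trans (hρ ▸ htr)

/-- A separable bipartite state `ρ_AB` on `ℂ^{d_A} ⊗ ℂ^{d_B}` with
`rank ρ_AB = d` and `rank ρ_A = d` is a convex combination of at most `d` pure product
states. -/
theorem separable_convex_combination_of_rank {dA dB d : ℕ}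
    (ρ : Matrix (Fin dA × Fin dB) (Fin dA × Fin dB) ℂ)
    (hpsd : ρ.PosSemidef) (htr : ρ.trace = 1) (hsep : MatrixSeparable ρ)
    (hrank : ρ.rank = d) (hrankA : (trB ρ).rank = d) :
    ∃ (lam : Fin d → ℝ) (a : Fin d → Fin dA → ℂ) (b : Fin d → Fin dB → ℂ),
      (∀ i, 0 ≤ lam i) ∧ (∑ i, lam i) = 1 ∧
      (∀ i, star (a i) ⬝ᵥ a i = 1) ∧ (∀ i, star (b i) ⬝ᵥ b i = 1) ∧
      ρ = ∑ i, (lam i : ℂ) • (ketBra (a i) ⊗ₖ ketBra (b i)) :=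
  separable_convex_combination_of_rank_general ρ htr hsep hrank hrankA
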